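/- arXiv:1611.00824 — 2 statements merged into one kernel-verified Lean document; each statement's English description precedes it below -/
import Mathlib

section
/- Let A be a local ring with involution * such that 2 is a unit, a − a* lies in the Jacobson radical r for every a ∈ A, and r is nilpotent. Let I be a proper two-sided ideal of A with I* = I. Then the canonical reduction homomorphism U_{2m}(A) → U_{2m}(A/I) is surjective; concretely, for every matrix Y ∈ M_{2m}(A) such that every entry of YᴴJ₀Y − J₀ lies in I, there exists X ∈ M_{2m}(A) with XᴴJ₀X = J₀ and every entry of X − Y lying in I. -/
/-!
Newton's method for the form `j`: if `y` is unitary modulo an ideal, the defect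
`e = y* j y - j` is skew-Hermitian, and the correction `y ↦ y (1 + c)` with `c = -½ j⁻¹ e` kills
the linear part of the new defect, so the defect moves from `𝔞 ^ k` to `𝔞 ^ (2k)` while `y`
changes only modulo `𝔞 ^ k`. For a nilpotent star-invariant ideal, finitely many steps give an
exact unitary lift. Matrices over `A` with entries in `I` form such an ideal of `M_{2m}(A)`,
because `I` consists of non-units and products of `e` non-units vanish.
-/

open Matrix

/-- The standard symplectic matrix `J₀ ∈ M_{2m}(A)`: the 2×2 block matrix
`[[0, I_m], [-I_m, 0]]` with `m × m` blocks. -/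
def stdSymplectic (A : Type*) [Ring A] (m : ℕ) : Matrix (Fin (2 * m)) (Fin (2 * m)) A :=
  Matrix.of fun i j =>
    if (i : ℕ) + m = (j : ℕ) then (1 : A)
    else if (j : ℕ) + m = (i : ℕ) then (-1 : A) else 0

namespace Ideal

variable {R : Type*} [Ring R]

theorem star_mem_pow [StarRing R] {𝔞 : Ideal R} [𝔞.IsTwoSided] (h𝔞 : ∀ x ∈ 𝔞, star x ∈ 𝔞) :
    ∀ k : ℕ, ∀ x ∈ 𝔞 ^ k, star x ∈ 𝔞 ^ k
  | 0, _, _ => by simp [Submodule.pow_zero]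
  | k + 1, x, hx => by
    rw [Submodule.pow_succ] at hx
    refine Submodule.mul_induction_on hx (fun a ha b hb => ?_) fun x y hx hy => ?_
    · rw [star_mul, IsTwoSided.pow_succ]
      exact mul_mem_mul (h𝔞 b hb) (star_mem_pow h𝔞 k a ha)
    · rw [star_add]; exact add_mem hx hy

theorem pow_eq_bot_of_list_prod_eq_zero {𝔞 : Ideal R} {e : ℕ}
    (h𝔞 : ∀ l : List R, l.length = e → (∀ x ∈ l, x ∈ 𝔞) → l.prod = 0) : 𝔞 ^ e = ⊥ := by
  suffices key : ∀ k, ∀ x ∈ 𝔞 ^ k, ∀ l : List R, k + l.length = e → (∀ a ∈ l, a ∈ 𝔞) →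
      x * l.prod = 0 by
    refine eq_bot_iff.2 fun x hx => ?_
    simpa using key e x hx [] (by simp) (by simp)
  intro k
  induction k with
  | zero => intro x _ l hl hl𝔞; rw [h𝔞 l (by omega) hl𝔞, mul_zero]
  | succ k ih =>
    intro x hx
    rw [Submodule.pow_succ] at hx
    refine Submodule.mul_induction_on hx (fun a ha b hb l hl hl𝔞 => ?_)
      fun x y hx hy l hl hl𝔞 => ?_
    · rw [mul_assoc, ← List.prod_cons]
      exact ih a ha (b :: l) (by simp; omega) (by simpa using ⟨hb, hl𝔞⟩)
    · rw [add_mul, hx l hl hl𝔞, hy l hl hl𝔞, add_zero]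

theorem matrix_pow_le {n : Type*} [Fintype n] [DecidableEq n] (𝔞 : Ideal R) :
    ∀ k : ℕ, 𝔞.matrix n ^ k ≤ (𝔞 ^ k).matrix n
  | 0 => by simp [Submodule.pow_zero, matrix_top]
  | k + 1 => by
    rw [Submodule.pow_succ, Submodule.pow_succ, mul_le]
    intro M hM N hN i j
    rw [Matrix.mul_apply]
    exact Submodule.sum_mem _ fun l _ => mul_mem_mul (matrix_pow_le 𝔞 k hM i l) (hN l j)

theorem isNilpotent_matrix {n : Type*} [Fintype n] [DecidableEq n] {𝔞 : Ideal R}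
    (h𝔞 : IsNilpotent 𝔞) : IsNilpotent (𝔞.matrix n) := by
  obtain ⟨e, he⟩ := h𝔞
  refine ⟨e, le_bot_iff.1 ?_⟩
  simpa [he, zero_eq_bot, matrix_bot] using matrix_pow_le 𝔞 e

end Ideal

section UnitaryLift

variable {R : Type*} [Ring R] [StarRing R]

def unitaryDefect (j y : R) : R := star y * j * y - j

theorem star_unitaryDefect {j : R} (hj : star j = -j) (y : R) :
    star (unitaryDefect j y) = -unitaryDefect j y := by
  simp only [unitaryDefect, star_sub, star_mul, star_star, hj, mul_assoc]
  noncomm_ring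

theorem unitaryDefect_mul_one_add {j y c : R} (hc : star c * j + j * c = -unitaryDefect j y) :
    unitaryDefect j (y * (1 + c)) = unitaryDefect j y * c + star c * unitaryDefect j y +
      star c * j * c + star c * unitaryDefect j y * c := by
  set e := unitaryDefect j y
  have hyjy : star y * j * y = j + e := by simp only [e, unitaryDefect]; abel
  calc unitaryDefect j (y * (1 + c))
      = (1 + star c) * (star y * j * y) * (1 + c) - j := by
        simp only [unitaryDefect, star_mul, star_add, star_one]; noncomm_ring
    _ = (e + (star c * j + j * c)) + (e * c + star c * e + star c * j * c + star c * e * c) := by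
        rw [hyjy]; noncomm_ring
    _ = _ := by rw [hc, add_neg_cancel, zero_add]

theorem star_invOf_two [Invertible (2 : R)] : star (⅟2 : R) = ⅟2 := by
  refine (invOf_eq_left_inv ?_).symm
  calc star (⅟2 : R) * 2 = star (2 * ⅟2) := by rw [star_mul, star_ofNat]
    _ = 1 := by rw [mul_invOf_self, star_one]

variable [Invertible (2 : R)]

def newtonCorrection (j y : R) [Invertible j] : R := -(⅟2 * (⅟j * unitaryDefect j y))

theorem star_newtonCorrection_mul_add {j : R} [Invertible j] (hj : star j = -j) (y : R) :
    star (newtonCorrection j y) * j + j * newtonCorrection j y = -unitaryDefect j y := by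
  set e := unitaryDefect j y
  have half_comm : ∀ a : R, ⅟2 * a = a * ⅟2 := fun a => ((Commute.ofNat_left 2 a).invOf_left).eq
  have star_invOf_mul : star (⅟j) * j = -1 :=
    calc star (⅟j) * j = -star (j * ⅟j) := by rw [star_mul, hj, mul_neg, neg_neg]
      _ = -1 := by rw [mul_invOf_self, star_one]
  have hjc : j * newtonCorrection j y = -(⅟2 * e) := by
    rw [newtonCorrection, mul_neg, ← mul_assoc, ← half_comm, mul_assoc, mul_invOf_cancel_left]
  have hcj : star (newtonCorrection j y) * j = -(⅟2 * e) := by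
    rw [newtonCorrection, star_neg, star_mul, star_mul, star_invOf_two, star_unitaryDefect hj,
      neg_mul, mul_assoc, mul_assoc, half_comm j, ← mul_assoc (star ⅟j), star_invOf_mul,
      neg_one_mul, mul_neg, neg_mul, neg_neg, half_comm]
  rw [hjc, hcj, ← neg_add, ← add_mul, invOf_two_add_invOf_two, one_mul]

variable {j : R} [Invertible j] {𝔞 : Ideal R} [𝔞.IsTwoSided]

theorem exists_sub_mem_pow_unitaryDefect_mem_pow_add (hj : star j = -j)
    (h𝔞 : ∀ x ∈ 𝔞, star x ∈ 𝔞) {k : ℕ} {y : R} (hy : unitaryDefect j y ∈ 𝔞 ^ k) :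
    ∃ x, x - y ∈ 𝔞 ^ k ∧ unitaryDefect j x ∈ 𝔞 ^ (k + k) := by
  set c := newtonCorrection j y
  have hc : c ∈ 𝔞 ^ k := neg_mem (Ideal.mul_mem_left _ _ (Ideal.mul_mem_left _ _ hy))
  have hc' : star c ∈ 𝔞 ^ k := Ideal.star_mem_pow h𝔞 k c hc
  refine ⟨y * (1 + c), by simpa [mul_add] using Ideal.mul_mem_left _ y hc, ?_⟩
  rw [unitaryDefect_mul_one_add (star_newtonCorrection_mul_add hj y), Ideal.IsTwoSided.pow_add]
  refine add_mem (add_mem (add_mem (Ideal.mul_mem_mul hy hc) (Ideal.mul_mem_mul hc' hy)) ?_) ?_ <;>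
    exact Ideal.mul_mem_mul (Ideal.mul_mem_right _ _ hc') hc

theorem exists_sub_mem_unitaryDefect_mem_pow_two_pow (hj : star j = -j)
    (h𝔞 : ∀ x ∈ 𝔞, star x ∈ 𝔞) {y : R} (hy : unitaryDefect j y ∈ 𝔞) (d : ℕ) :
    ∃ x, x - y ∈ 𝔞 ∧ unitaryDefect j x ∈ 𝔞 ^ 2 ^ d := by
  induction d with
  | zero => exact ⟨y, by simp, by simpa [Submodule.pow_one] using hy⟩
  | succ d ih =>
    obtain ⟨x, hxy, hx⟩ := ih
    obtain ⟨x', hx'x, hx'⟩ := exists_sub_mem_pow_unitaryDefect_mem_pow_add hj h𝔞 hx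
    refine ⟨x', ?_, by rwa [pow_succ, mul_two]⟩
    rw [← sub_add_sub_cancel x' x y]
    exact add_mem (Ideal.pow_le_self (pow_ne_zero d two_ne_zero) hx'x) hxy

theorem exists_unitary_sub_mem_of_isNilpotent (hj : star j = -j)
    (h𝔞 : ∀ x ∈ 𝔞, star x ∈ 𝔞) (hnil : IsNilpotent 𝔞) {y : R} (hy : unitaryDefect j y ∈ 𝔞) :
    ∃ x, star x * j * x = j ∧ x - y ∈ 𝔞 := by
  obtain ⟨e, he⟩ := hnil
  obtain ⟨x, hxy, hx⟩ := exists_sub_mem_unitaryDefect_mem_pow_two_pow hj h𝔞 hy e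
  have hx0 : unitaryDefect j x ∈ 𝔞 ^ e := Ideal.pow_le_pow_right Nat.lt_two_pow_self.le hx
  rw [he, Ideal.zero_eq_bot, Ideal.mem_bot, unitaryDefect, sub_eq_zero] at hx0
  exact ⟨x, hx0, hxy⟩

end UnitaryLift

section stdSymplectic

variable {A : Type*} [Ring A] {m : ℕ}

theorem conjTranspose_stdSymplectic [StarRing A] :
    (stdSymplectic A m)ᴴ = -stdSymplectic A m := by
  ext i j
  rw [conjTranspose_apply, neg_apply]
  simp only [stdSymplectic, of_apply]
  split_ifs <;> first | omega | simp

theorem stdSymplectic_mul_apply (M : Matrix (Fin (2 * m)) (Fin (2 * m)) A) (i k : Fin (2 * m)) :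
    (stdSymplectic A m * M) i k =
      if h : (i : ℕ) < m then M ⟨i + m, by omega⟩ k else -M ⟨i - m, by omega⟩ k := by
  rw [mul_apply]
  split_ifs with h
  · rw [Finset.sum_eq_single_of_mem ⟨i + m, by omega⟩ (Finset.mem_univ _)]
    · simp [stdSymplectic]
    · intro l _ hl
      simp only [Ne, Fin.ext_iff] at hl
      simp only [stdSymplectic, of_apply]
      split_ifs <;> first | omega | simp
  · rw [Finset.sum_eq_single_of_mem ⟨i - m, by omega⟩ (Finset.mem_univ _)]
    · simp only [stdSymplectic, of_apply]
      split_ifs <;> first | omega | simp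
    · intro l _ hl
      simp only [Ne, Fin.ext_iff] at hl
      simp only [stdSymplectic, of_apply]
      split_ifs <;> first | omega | simp

theorem stdSymplectic_mul_self : stdSymplectic A m * stdSymplectic A m = -1 := by
  ext i k
  rw [stdSymplectic_mul_apply, neg_apply]
  simp only [stdSymplectic, of_apply, one_apply, Fin.ext_iff]
  split_ifs <;> first | omega | simp

instance : Invertible (stdSymplectic A m) :=
  ⟨-stdSymplectic A m, by rw [neg_mul, stdSymplectic_mul_self, neg_neg],
    by rw [mul_neg, stdSymplectic_mul_self, neg_neg]⟩

end stdSymplectic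

theorem TwoSidedIdeal.mem_nonunits_of_ne_top {R : Type*} [Ring R] {I : TwoSidedIdeal R}
    (hI : I ≠ ⊤) {a : R} (ha : a ∈ I) : a ∈ nonunits R := fun hu =>
  hI (I.eq_top (by simpa using I.mul_mem_left (↑hu.unit⁻¹) a ha))

theorem stmt9_general {A : Type*} [Ring A] [StarRing A]
    (h2 : IsUnit (2 : A))
    (hnil : ∃ e : ℕ, 0 < e ∧
      ∀ l : List A, l.length = e → (∀ x ∈ l, x ∈ nonunits A) → l.prod = 0)
    {m : ℕ}
    (I : TwoSidedIdeal A) (hI : I ≠ ⊤) (hIstar : ∀ a ∈ I, star a ∈ I)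
    (Y : Matrix (Fin (2 * m)) (Fin (2 * m)) A)
    (hY : ∀ i j, (Yᴴ * stdSymplectic A m * Y - stdSymplectic A m) i j ∈ I) :
    ∃ X : Matrix (Fin (2 * m)) (Fin (2 * m)) A,
      Xᴴ * stdSymplectic A m * X = stdSymplectic A m ∧ ∀ i j, (X - Y) i j ∈ I := by
  obtain ⟨e, -, he⟩ := hnil
  have hI_nilpotent : IsNilpotent I.asIdeal := ⟨e, Ideal.pow_eq_bot_of_list_prod_eq_zero
    fun l hl hlI => he l hl fun x hx => TwoSidedIdeal.mem_nonunits_of_ne_top hI (hlI x hx)⟩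
  have hM_nilpotent : IsNilpotent (I.matrix (Fin (2 * m))).asIdeal := by
    rw [TwoSidedIdeal.asIdeal_matrix]
    exact Ideal.isNilpotent_matrix hI_nilpotent
  have hM_star :
      ∀ M ∈ (I.matrix (Fin (2 * m))).asIdeal, star M ∈ (I.matrix (Fin (2 * m))).asIdeal :=
    fun M hM i j => hIstar _ (hM j i)
  have h2' : IsUnit (2 : Matrix (Fin (2 * m)) (Fin (2 * m)) A) := by
    rw [← map_ofNat (scalar (Fin (2 * m))) 2]
    exact h2.map _
  let := h2'.invertible
  obtain ⟨X, hX, hXY⟩ := exists_unitary_sub_mem_of_isNilpotent (j := stdSymplectic A m)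
    conjTranspose_stdSymplectic hM_star hM_nilpotent (y := Y) hY
  exact ⟨X, hX, hXY⟩

/-- Let `A` be a local ring with involution `*` such that `2` is a unit,
`a - a*` is a non-unit for every `a`, and the Jacobson radical (= set of non-units) is
nilpotent.  Let `I` be a proper `*`-invariant two-sided ideal of `A`.  Then the canonical
reduction homomorphism `U_{2m}(A) → U_{2m}(A/I)` is surjective: for every `Y ∈ M_{2m}(A)`
with `YᴴJ₀Y ≡ J₀` entrywise mod `I` there is `X` with `XᴴJ₀X = J₀` and `X ≡ Y` entrywise
mod `I`. -/
theorem stmt9 {A : Type*} [Ring A] [StarRing A] [IsLocalRing A]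
    (h2 : IsUnit (2 : A)) (hsk : ∀ a : A, a - star a ∈ nonunits A)
    (hnil : ∃ e : ℕ, 0 < e ∧
      ∀ l : List A, l.length = e → (∀ x ∈ l, x ∈ nonunits A) → l.prod = 0)
    {m : ℕ} (hm : 1 ≤ m)
    (I : TwoSidedIdeal A) (hI : I ≠ ⊤) (hIstar : ∀ a ∈ I, star a ∈ I)
    (Y : Matrix (Fin (2 * m)) (Fin (2 * m)) A)
    (hY : ∀ i j, (Yᴴ * stdSymplectic A m * Y - stdSymplectic A m) i j ∈ I) :
    ∃ X : Matrix (Fin (2 * m)) (Fin (2 * m)) A,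
      Xᴴ * stdSymplectic A m * X = stdSymplectic A m ∧ ∀ i j, (X - Y) i j ∈ I :=
  stmt9_general h2 hnil I hI hIstar Y hY
end

section
/- Let A be a finite local ring with involution * such that 2 is a unit and a − a* lies in the Jacobson radical r for every a ∈ A. Let R = {a ∈ A : a* = a}, S = {a ∈ A : a* = −a} and 𝔪 = R ∩ r. Then for every s ∈ S, the number of pairs (a, b) ∈ A × A such that not both a and b lie in r and a*b − b*a = s equals (|A| − |r|)(|R| + |𝔪|) = (|A|² − |r|²)/|S|; in particular this number is independent of s. -/
/-!
Put `c = a* b`, so that `a* b - b* a = c - c*`. If `a` is a unit, `b ↦ a* b` is a bijection;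
if `a ∈ r` and `b` is a unit, `a ↦ a* b` is a bijection preserving `r`. Hence the count is
`|A| - |r|` times the number of solutions of `c - c* = s` plus the number of those in `r`.
These solutions form the translate of `R` by `s / 2`, which is skew and hence lies in `r`,
so there are `|R|` of them, `|𝔪|` of them in `r`. Finally `A = R ⊕ S` with `S ⊆ r`, so
`|A| = |R| |S|` and `|r| = |𝔪| |S|`.
-/

section StarRing

variable {A : Type*} [Ring A] [StarRing A]

theorem star_mul_sub_star_mul_eq_sub_star (a b : A) :
    star a * b - star b * a = star a * b - star (star a * b) := by
  rw [star_mul, star_star]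

theorem card_isUnit_fst_and_star_mul (Q : A → Prop) :
    Nat.card {p : A × A // IsUnit p.1 ∧ Q (star p.1 * p.2)} =
      Nat.card {a : A // IsUnit a} * Nat.card {c : A // Q c} := by
  rw [← Nat.card_prod]
  refine Nat.card_congr
    { toFun := fun p => (⟨p.1.1, p.2.1⟩, ⟨star p.1.1 * p.1.2, p.2.2⟩)
      invFun := fun x => ⟨(x.1.1, Ring.inverse (star x.1.1) * x.2.1), x.1.2, ?_⟩
      left_inv := fun p => ?_
      right_inv := fun x => ?_ }
  · rw [← mul_assoc, Ring.mul_inverse_cancel _ (isUnit_star.2 x.1.2), one_mul]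
    exact x.2.2
  · ext
    · rfl
    · exact Ring.inverse_mul_cancel_left _ _ (isUnit_star.2 p.2.1)
  · ext
    · rfl
    · exact Ring.mul_inverse_cancel_left _ _ (isUnit_star.2 x.1.2)

theorem card_isUnit_snd_and_star_mul (Q : A → Prop) :
    Nat.card {p : A × A // IsUnit p.2 ∧ Q (star p.1 * p.2)} =
      Nat.card {b : A // IsUnit b} * Nat.card {c : A // Q c} := by
  rw [← Nat.card_prod]
  refine Nat.card_congr
    { toFun := fun p => (⟨p.1.2, p.2.1⟩, ⟨star p.1.1 * p.1.2, p.2.2⟩)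
      invFun := fun x => ⟨(star (x.2.1 * Ring.inverse x.1.1), x.1.1), x.1.2, ?_⟩
      left_inv := fun p => ?_
      right_inv := fun x => ?_ }
  · rw [star_star, mul_assoc, Ring.inverse_mul_cancel _ x.1.2, mul_one]
    exact x.2.2
  · ext
    · simp only [Ring.mul_inverse_cancel_right _ _ p.2.1, star_star]
    · rfl
  · ext
    · rfl
    · simp only [star_star, Ring.inverse_mul_cancel_right _ _ x.1.2]

theorem star_mul_mem_nonunits_iff {a b : A} (hb : IsUnit b) :
    star a * b ∈ nonunits A ↔ a ∈ nonunits A := by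
  simp only [mem_nonunits_iff, not_iff_not]
  rw [← hb.unit_spec, Units.isUnit_mul_units, isUnit_star]

theorem card_not_both_nonunits_and_star_mul [Finite A] (Q : A → Prop) :
    Nat.card {p : A × A // ¬(p.1 ∈ nonunits A ∧ p.2 ∈ nonunits A) ∧ Q (star p.1 * p.2)} =
      Nat.card {a : A // IsUnit a} *
        (Nat.card {c : A // Q c} + Nat.card {c : A // c ∈ nonunits A ∧ Q c}) := by
  classical
  have hsplit (p : A × A) : ¬(p.1 ∈ nonunits A ∧ p.2 ∈ nonunits A) ∧ Q (star p.1 * p.2) ↔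
      (IsUnit p.1 ∧ Q (star p.1 * p.2)) ∨
        (IsUnit p.2 ∧ star p.1 * p.2 ∈ nonunits A ∧ Q (star p.1 * p.2)) := by
    by_cases hb : IsUnit p.2
    · rw [star_mul_mem_nonunits_iff hb]
      simp only [mem_nonunits_iff]
      tauto
    · simp only [mem_nonunits_iff]
      tauto
  have hdisj : Disjoint (fun p : A × A => IsUnit p.1 ∧ Q (star p.1 * p.2))
      (fun p => IsUnit p.2 ∧ star p.1 * p.2 ∈ nonunits A ∧ Q (star p.1 * p.2)) :=
    fun _ h₁ h₂ p hp => (h₂ p hp).2.1 (((isUnit_star.2 (h₁ p hp).1).mul (h₂ p hp).1))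
  rw [Nat.card_congr ((Equiv.subtypeEquivRight hsplit).trans (subtypeOrEquiv _ _ hdisj)),
    Nat.card_sum, card_isUnit_fst_and_star_mul,
    card_isUnit_snd_and_star_mul fun c => c ∈ nonunits A ∧ Q c, mul_add]

theorem card_and_sub_star_eq_sub_star {P : A → Prop} (t : A) (hP : ∀ c, P (c - t) ↔ P c) :
    Nat.card {c : A // P c ∧ c - star c = t - star t} = Nat.card {h : A // star h = h ∧ P h} :=
  Nat.card_congr <| (Equiv.subRight t).subtypeEquiv fun c => by
    rw [Equiv.subRight_apply, star_sub, hP, sub_eq_sub_iff_sub_eq_sub, eq_comm, and_comm]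

theorem card_sub_star_eq_sub_star (t : A) :
    Nat.card {c : A // c - star c = t - star t} = Nat.card {h : A // star h = h} := by
  simpa using card_and_sub_star_eq_sub_star (P := fun _ => True) t fun _ => Iff.rfl

end StarRing

section HermitianSkew

variable {A : Type*} [Ring A] [StarRing A] [Invertible (2 : A)]

theorem star_invOf_two_mul (x : A) : star (⅟2 * x) = ⅟2 * star x := by
  have hstar : ⅟2 = star (⅟2 : A) :=
    invOf_eq_left_inv <| calc
      star ⅟2 * 2 = star (2 * ⅟2 : A) := by rw [star_mul, star_ofNat]
      _ = 1 := by rw [mul_invOf_self, star_one]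
  rw [star_mul, ← hstar, ((Commute.ofNat_left 2 (star x)).invOf_left).eq]

def hermSkewEquiv : A ≃ {a : A // star a = a} × {a : A // star a = -a} where
  toFun x := (⟨⅟2 * (x + star x), by rw [star_invOf_two_mul, star_add, star_star, add_comm]⟩,
    ⟨⅟2 * (x - star x), by rw [star_invOf_two_mul, star_sub, star_star, ← neg_sub, mul_neg]⟩)
  invFun p := p.1 + p.2
  left_inv x := by
    change ⅟2 * (x + star x) + ⅟2 * (x - star x) = x
    rw [← mul_add, show x + star x + (x - star x) = 2 * x by rw [two_mul]; abel,
      invOf_mul_cancel_left]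
  right_inv := by
    rintro ⟨⟨h, hh⟩, ⟨k, hk⟩⟩
    ext
    · simp only [star_add, hh, hk]
      rw [show h + k + (h + -k) = 2 * h by rw [two_mul]; abel, invOf_mul_cancel_left]
    · simp only [star_add, hh, hk]
      rw [show h + k - (h + -k) = 2 * k by rw [two_mul]; abel, invOf_mul_cancel_left]

theorem card_eq_card_hermitian_mul_card_skew :
    Nat.card A = Nat.card {h : A // star h = h} * Nat.card {k : A // star k = -k} := by
  rw [← Nat.card_prod]
  exact Nat.card_congr hermSkewEquiv

theorem card_subtype_eq_card_hermitian_mul_card_skew {P : A → Prop}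
    (hP : ∀ a k, star k = -k → (P (a + k) ↔ P a)) :
    Nat.card {x : A // P x} =
      Nat.card {h : A // star h = h ∧ P h} * Nat.card {k : A // star k = -k} := by
  rw [← Nat.card_prod]
  refine Nat.card_congr <|
    (hermSkewEquiv.subtypeEquiv (q := fun y => P y.1.1) fun x => ?_).trans <|
    Equiv.prodSubtypeFstEquivSubtypeProd.trans <|
      Equiv.prodCongr (Equiv.subtypeSubtypeEquivSubtypeInter _ _) (Equiv.refl _)
  exact (Iff.of_eq (congrArg P (hermSkewEquiv.symm_apply_apply x))).symm.trans
    (hP _ _ (hermSkewEquiv x).2.2)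

end HermitianSkew

theorem card_isUnit_eq_card_sub_card_nonunits {M : Type*} [Monoid M] [Finite M] :
    Nat.card {a : M // IsUnit a} = Nat.card M - Nat.card (nonunits M) := by
  classical
  refine Nat.eq_sub_of_add_eq ?_
  rw [← Nat.card_sum]
  exact Nat.card_congr (Equiv.sumCompl IsUnit)

theorem IsLocalRing.add_mem_nonunits_iff {A : Type*} [Ring A] [IsLocalRing A] {a k : A}
    (hk : k ∈ nonunits A) : a + k ∈ nonunits A ↔ a ∈ nonunits A := by
  have hk' : -k ∈ nonunits A := mem_nonunits_iff.2 ((IsUnit.neg_iff k).not.2 hk)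
  exact ⟨fun h => by simpa using nonunits_add h hk', fun h => nonunits_add h hk⟩

theorem mem_nonunits_of_star_eq_neg {A : Type*} [Ring A] [StarRing A] (h2 : IsUnit (2 : A))
    {k : A} (hk : star k = -k) (hsub : k - star k ∈ nonunits A) : k ∈ nonunits A :=
  fun hku => hsub (by rw [hk, sub_neg_eq_add, ← two_mul]; exact h2.mul hku)

section LocalRing

variable {A : Type*} [Ring A] [StarRing A] [IsLocalRing A] [Invertible (2 : A)]

theorem add_skew_mem_nonunits_iff (hsk : ∀ a : A, a - star a ∈ nonunits A) {a k : A}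
    (hk : star k = -k) : a + k ∈ nonunits A ↔ a ∈ nonunits A :=
  IsLocalRing.add_mem_nonunits_iff <|
    mem_nonunits_of_star_eq_neg (isUnit_of_invertible 2) hk (hsk k)

theorem card_nonunits_eq_card_hermitian_nonunits_mul_card_skew
    (hsk : ∀ a : A, a - star a ∈ nonunits A) :
    Nat.card (nonunits A) =
      Nat.card {h : A // star h = h ∧ h ∈ nonunits A} * Nat.card {k : A // star k = -k} :=
  card_subtype_eq_card_hermitian_mul_card_skew fun _ _ hk => add_skew_mem_nonunits_iff hsk hk

theorem card_not_both_nonunits_star_mul_sub_star_mul [Finite A]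
    (hsk : ∀ a : A, a - star a ∈ nonunits A) {s : A} (hs : star s = -s) :
    Nat.card {p : A × A //
        ¬(p.1 ∈ nonunits A ∧ p.2 ∈ nonunits A) ∧ star p.1 * p.2 - star p.2 * p.1 = s} =
      (Nat.card A - Nat.card (nonunits A)) *
        (Nat.card {a : A // star a = a} + Nat.card {a : A // star a = a ∧ a ∈ nonunits A}) := by
  have ht : star (⅟2 * s) = -(⅟2 * s) := by rw [star_invOf_two_mul, hs, mul_neg]
  have hs' : ⅟2 * s - star (⅟2 * s) = s := by
    rw [ht, sub_neg_eq_add, ← mul_add, ← two_mul, invOf_mul_cancel_left]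
  simp only [star_mul_sub_star_mul_eq_sub_star]
  rw [card_not_both_nonunits_and_star_mul fun c => c - star c = s,
    card_isUnit_eq_card_sub_card_nonunits, ← hs', card_sub_star_eq_sub_star,
    card_and_sub_star_eq_sub_star _ fun c => by
      rw [sub_eq_add_neg, add_skew_mem_nonunits_iff hsk (by rw [star_neg, ht, neg_neg])]]

end LocalRing

/-- Let `A` be a finite local ring with involution `*` such that `2` is a unit
and `a - a*` is a non-unit for every `a`.  Let `R = {a : a* = a}`, `S = {a : a* = -a}` and
`𝔪 = R ∩ r` where `r = nonunits A` is the Jacobson radical.  Then for every `s ∈ S`, the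
number of pairs `(a, b) ∈ A × A` with not both `a, b` non-units and `a*b - b*a = s` equals
`(|A| - |r|) * (|R| + |𝔪|)`, and multiplied by `|S|` it equals `|A|² - |r|²`; in particular
it does not depend on `s`. -/
theorem stmt14 {A : Type*} [Ring A] [StarRing A] [IsLocalRing A] [Finite A]
    (h2 : IsUnit (2 : A)) (hsk : ∀ a : A, a - star a ∈ nonunits A)
    (s : A) (hs : star s = -s) :
    Nat.card {p : A × A //
        ¬(p.1 ∈ nonunits A ∧ p.2 ∈ nonunits A) ∧ star p.1 * p.2 - star p.2 * p.1 = s} =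
      (Nat.card A - Nat.card (nonunits A)) *
        (Nat.card {a : A // star a = a} +
          Nat.card {a : A // star a = a ∧ a ∈ nonunits A}) ∧
    Nat.card {p : A × A //
        ¬(p.1 ∈ nonunits A ∧ p.2 ∈ nonunits A) ∧ star p.1 * p.2 - star p.2 * p.1 = s} *
      Nat.card {a : A // star a = -a} =
      Nat.card A ^ 2 - Nat.card (nonunits A) ^ 2 := by
  let _ : Invertible (2 : A) := h2.invertible
  have hcount := card_not_both_nonunits_star_mul_sub_star_mul hsk hs
  refine ⟨hcount, ?_⟩
  rw [hcount, mul_assoc, add_mul, ← card_eq_card_hermitian_mul_card_skew,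
    ← card_nonunits_eq_card_hermitian_nonunits_mul_card_skew hsk, Nat.sq_sub_sq, mul_comm]
end
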